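/- Two triangles are congruent if they have an equal side, an equal angle opposite that side, and equal bisectors of the external angle at that vertex. Precisely: if triangles ABC and ABC' satisfy ∠ACB = ∠AC'B, with C and C' on the same side of AB and of its perpendicular bisector, and the external angle bisectors at C and C' (from the vertex to line AB) have equal lengths, then the triangles are congruent. -/

import Mathlib

/-!
With `a = CA`, `b = CB` and `γ = ∠ACB`, the foot `E` of the external bisector divides `AB`
externally in the ratio `a : b`, which gives `CE² (a - b)² = 2 a² b² (1 - cos γ)`. The law of
cosines reads `AB² = (a - b)² + 2ab (1 - cos γ)`, so `X = (a - b)²` solves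
`(AB² - X)² = 2 (1 - cos γ) CE² X` with `X < AB²`, a root that is unique; hence `CE`, `γ` and `AB`
determine `(a - b)²` and `ab`. The side of the perpendicular bisector fixes the sign of `a - b`, so
`a` and `b` are determined, and a point is determined by its distances to `A` and `B` and the side
of `AB` it lies on.
-/

open EuclideanGeometry Real

noncomputable section

abbrev Pt : Type := EuclideanSpace ℝ (Fin 2)

open scoped RealInnerProductSpace

lemma SameRay.mul_nonneg {x y : ℝ} (h : SameRay ℝ x y) : 0 ≤ x * y := by
  rcases eq_or_ne x 0 with rfl | hx
  · simp
  rcases eq_or_ne y 0 with rfl | hy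
  · simp
  obtain ⟨r₁, r₂, hr₁, hr₂, hr⟩ := h.exists_pos hx hy
  simp only [smul_eq_mul] at hr
  have : r₂ * (x * y) = r₁ * x ^ 2 := by linear_combination (-x) * hr
  exact nonneg_of_mul_nonneg_right (this ▸ by positivity) hr₂

theorem AffineSubspace.WSameSide.mono {R V P : Type*} [CommRing R] [PartialOrder R]
    [IsStrictOrderedRing R] [AddCommGroup V] [Module R V] [AddTorsor V P]
    {s t : AffineSubspace R P} {x y : P} (h : s.WSameSide x y) (hst : s ≤ t) :
    t.WSameSide x y := by
  obtain ⟨p₁, hp₁, p₂, hp₂, hray⟩ := h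
  exact ⟨p₁, hst hp₁, p₂, hst hp₂, hray⟩

theorem notMem_affineSpan_pair_of_affineIndependent {k V P : Type*} [DivisionRing k]
    [AddCommGroup V] [Module k V] [AddTorsor V P] {A B C : P}
    (h : AffineIndependent k ![A, B, C]) : C ∉ line[k, A, B] := by
  intro hC
  apply affineIndependent_iff_not_collinear_set.1 h
  have := collinear_insert_of_mem_affineSpan_pair hC
  rwa [Set.insert_comm, Set.pair_comm] at this

theorem exists_vsub_eq_of_mem_affineSpan_pair {k V P : Type*} [Ring k] [AddCommGroup V]
    [Module k V] [AddTorsor V P] {A B X : P} (C : P) (hX : X ∈ line[k, A, B]) :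
    ∃ t : k, X -ᵥ C = (A -ᵥ C) + t • ((B -ᵥ C) - (A -ᵥ C)) := by
  obtain ⟨t, rfl⟩ := mem_affineSpan_pair_iff_exists_lineMap_eq.1 hX
  rw [AffineMap.lineMap_apply, vadd_vsub_assoc, vsub_sub_vsub_cancel_right, add_comm]
  exact ⟨t, rfl⟩

section Euclidean

variable {V P : Type*} [NormedAddCommGroup V] [InnerProductSpace ℝ V] [MetricSpace P]
  [NormedAddTorsor V P]

open AffineSubspace

theorem AffineSubspace.sOppSide_perpBisector {p₁ p₂ : P} (h : p₁ ≠ p₂) :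
    (perpBisector p₁ p₂).SOppSide p₁ p₂ := by
  refine sOppSide_of_vsub_eq_smul (midpoint_mem_perpBisector p₁ p₂)
    (midpoint_mem_perpBisector p₁ p₂) (left_vsub_midpoint p₁ p₂) (c₂ := -⅟2) ?_ ?_ ?_ ?_
  · rw [right_vsub_midpoint, neg_smul, ← smul_neg, neg_vsub_eq_vsub_rev]
  · norm_num
  · simpa [mem_perpBisector_iff_dist_eq, eq_comm] using h
  · simpa [mem_perpBisector_iff_dist_eq] using h

theorem eq_of_dist_eq_of_sSameSide {A B C C' : P} (hA : dist A C = dist A C')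
    (hB : dist B C = dist B C') (hside : line[ℝ, A, B].SSameSide C C') : C = C' := by
  by_contra hne
  have hle : line[ℝ, A, B] ≤ perpBisector C C' := by
    rw [affineSpan_le, Set.insert_subset_iff, Set.singleton_subset_iff]
    exact ⟨mem_perpBisector_iff_dist_eq.2 hA, mem_perpBisector_iff_dist_eq.2 hB⟩
  exact (hside.wSameSide.mono hle).not_sOppSide (sOppSide_perpBisector hne)

theorem dist_sq_sub_dist_sq_eq_inner_of_mem_perpBisector {A B p : P}
    (hp : p ∈ perpBisector A B) (X : P) :
    dist A X ^ 2 - dist B X ^ 2 = 2 * ⟪B -ᵥ A, X -ᵥ p⟫ := by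
  have hm : ⟪B -ᵥ A, p -ᵥ midpoint ℝ A B⟫ = 0 := mem_perpBisector_iff_inner_eq_zero'.1 hp
  have hXA : X -ᵥ A = (X -ᵥ midpoint ℝ A B) + (⅟2 : ℝ) • (B -ᵥ A) := by
    rw [← midpoint_vsub_left, vsub_add_vsub_cancel]
  have hXB : X -ᵥ B = (X -ᵥ midpoint ℝ A B) - (⅟2 : ℝ) • (B -ᵥ A) := by
    rw [sub_eq_add_neg, ← smul_neg, neg_vsub_eq_vsub_rev, ← midpoint_vsub_right,
      vsub_add_vsub_cancel]
  rw [dist_eq_norm_vsub' V, dist_eq_norm_vsub' V, hXA, hXB, norm_add_sq_real, norm_sub_sq_real,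
    ← vsub_sub_vsub_cancel_right X p (midpoint ℝ A B), inner_sub_right, hm, inner_smul_right]
  simp only [sub_zero, real_inner_comm, invOf_eq_inv]
  ring

theorem sq_sub_sq_mul_pos_of_sSameSide_perpBisector {A B C C' : P}
    (hside : (perpBisector A B).SSameSide C C') :
    0 < (dist A C ^ 2 - dist B C ^ 2) * (dist A C' ^ 2 - dist B C' ^ 2) := by
  obtain ⟨⟨p, hp, p', hp', hray⟩, hC, hC'⟩ := hside
  have hne : ∀ {X : P}, X ∉ perpBisector A B → dist A X ^ 2 - dist B X ^ 2 ≠ 0 := fun hX h =>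
    hX (mem_perpBisector_iff_dist_eq'.2 ((pow_left_inj₀ dist_nonneg dist_nonneg two_ne_zero).1
      (sub_eq_zero.1 h)))
  refine lt_of_le_of_ne ?_ (mul_ne_zero (hne hC) (hne hC')).symm
  rw [dist_sq_sub_dist_sq_eq_inner_of_mem_perpBisector hp,
    dist_sq_sub_dist_sq_eq_inner_of_mem_perpBisector hp']
  have h := (hray.map (innerₛₗ ℝ (B -ᵥ A))).mul_nonneg
  simp only [innerₛₗ_apply_apply] at h
  linarith


theorem dist_sub_dist_smul_vsub_eq_of_externalBisector {A B C D E : P}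
    (hC : C ∉ line[ℝ, A, B]) (hD : D ∈ line[ℝ, A, B]) (hbis : ∠ A C D = ∠ B C D)
    (hE : E ∈ line[ℝ, A, B]) (hperp : ⟪E -ᵥ C, D -ᵥ C⟫ = 0) :
    (dist A C - dist B C) • (E -ᵥ C) = dist A C • (B -ᵥ C) - dist B C • (A -ᵥ C) := by
  have hDC : D -ᵥ C ≠ 0 := vsub_ne_zero.2 fun h => hC (h ▸ hD)
  have hAC : A -ᵥ C ≠ 0 := vsub_ne_zero.2 fun h => hC (h ▸ left_mem_affineSpan_pair ℝ A B)
  have hBC : B -ᵥ C ≠ 0 := vsub_ne_zero.2 fun h => hC (h ▸ right_mem_affineSpan_pair ℝ A B)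
  have hcos : ‖B -ᵥ C‖ * ⟪A -ᵥ C, D -ᵥ C⟫ = ‖A -ᵥ C‖ * ⟪B -ᵥ C, D -ᵥ C⟫ := by
    have h := congrArg cos hbis
    simp only [EuclideanGeometry.angle, InnerProductGeometry.cos_angle] at h
    rw [div_eq_div_iff (by positivity) (by positivity)] at h
    exact mul_right_cancel₀ (norm_ne_zero_iff.2 hDC) (by linear_combination h)
  obtain ⟨t, hd⟩ := exists_vsub_eq_of_mem_affineSpan_pair C hD
  obtain ⟨r, he⟩ := exists_vsub_eq_of_mem_affineSpan_pair C hE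
  rw [dist_eq_norm_vsub V A C, dist_eq_norm_vsub V B C, he]
  set x := A -ᵥ C
  set y := B -ᵥ C
  set d := D -ᵥ C
  have hdd : ⟪x, d⟫ + t * (⟪y, d⟫ - ⟪x, d⟫) ≠ 0 := by
    have h : ⟪x + t • (y - x), d⟫ ≠ 0 := by rw [← hd]; exact inner_self_ne_zero.2 hDC
    simpa only [inner_add_left, inner_smul_left, inner_sub_left, RCLike.conj_to_real] using h
  have hr : r * (‖x‖ - ‖y‖) = ‖x‖ := by
    rw [he] at hperp
    simp only [inner_add_left, inner_smul_left, inner_sub_left, RCLike.conj_to_real] at hperp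
    by_contra hk
    have hk : ‖x‖ + r * (‖y‖ - ‖x‖) ≠ 0 := fun h => hk (by linear_combination -h)
    have hxd : ⟪x, d⟫ = 0 := by
      refine (mul_eq_zero.1 ?_).resolve_right hk
      linear_combination ‖x‖ * hperp + r * hcos
    have hyd : ⟪y, d⟫ = 0 := by
      refine (mul_eq_zero.1 ?_).resolve_right hk
      linear_combination ‖y‖ * hperp - (1 - r) * hcos
    exact hdd (by rw [hxd, hyd]; ring)
  linear_combination (norm := module) hr • (y - x)

theorem dist_sq_mul_sq_eq_of_externalBisector {A B C D E : P}
    (hC : C ∉ line[ℝ, A, B]) (hD : D ∈ line[ℝ, A, B]) (hbis : ∠ A C D = ∠ B C D)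
    (hE : E ∈ line[ℝ, A, B]) (hperp : ⟪E -ᵥ C, D -ᵥ C⟫ = 0) :
    dist C E ^ 2 * (dist A C - dist B C) ^ 2 =
      2 * (dist A C * dist B C) ^ 2 * (1 - cos (∠ A C B)) := by
  have h := congrArg (‖·‖ ^ 2) (dist_sub_dist_smul_vsub_eq_of_externalBisector hC hD hbis hE hperp)
  have hcos : ⟪B -ᵥ C, A -ᵥ C⟫ = cos (∠ A C B) * (dist A C * dist B C) := by
    rw [real_inner_comm, dist_eq_norm_vsub V A C, dist_eq_norm_vsub V B C]
    exact (InnerProductGeometry.cos_angle_mul_norm_mul_norm _ _).symm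
  simp only [norm_sub_sq_real, norm_smul, mul_pow, Real.norm_eq_abs, sq_abs, real_inner_smul_left,
    real_inner_smul_right, hcos, ← dist_eq_norm_vsub V] at h
  rw [dist_comm C E]
  linear_combination h

theorem eq_and_eq_of_lawCos_of_externalBisector {a b a' b' c k l : ℝ}
    (ha : 0 ≤ a) (hb : 0 ≤ b) (ha' : 0 ≤ a') (hb' : 0 ≤ b') (hl : 0 < l)
    (hc : c = a * a + b * b - 2 * a * b * k) (hc' : c = a' * a' + b' * b' - 2 * a' * b' * k)
    (hbis : l * (a - b) ^ 2 = 2 * (a * b) ^ 2 * (1 - k))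
    (hbis' : l * (a' - b') ^ 2 = 2 * (a' * b') ^ 2 * (1 - k))
    (hsgn : 0 < (a ^ 2 - b ^ 2) * (a' ^ 2 - b' ^ 2)) :
    a = a' ∧ b = b' := by
  have hsgn₀ : 0 < (a - b) * (a' - b') := by
    refine pos_of_mul_pos_right (a := (a + b) * (a' + b')) ?_ (by positivity)
    linear_combination hsgn
  have hd : 0 < (a - b) ^ 2 := by nlinarith
  have hd' : 0 < (a' - b') ^ 2 := by nlinarith
  have hpτ : 0 < (a * b) ^ 2 * (1 - k) := by nlinarith [mul_pos hl hd]
  have hτ : 0 < 1 - k := pos_of_mul_pos_right hpτ (sq_nonneg _)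
  have hp : 0 < a * b := lt_of_le_of_ne (mul_nonneg ha hb) fun h => by simp [← h] at hpτ
  have hp' : 0 < a' * b' := by
    refine lt_of_le_of_ne (mul_nonneg ha' hb') fun h => (mul_pos hl hd').ne' ?_
    rw [hbis', ← h]
    ring
  have hroot : (c - (a - b) ^ 2) ^ 2 = 2 * (1 - k) * l * (a - b) ^ 2 := by
    linear_combination (-2 * (1 - k)) * hbis + (c - (a - b) ^ 2 + 2 * a * b * (1 - k)) * hc
  have hroot' : (c - (a' - b') ^ 2) ^ 2 = 2 * (1 - k) * l * (a' - b') ^ 2 := by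
    linear_combination (-2 * (1 - k)) * hbis' + (c - (a' - b') ^ 2 + 2 * a' * b' * (1 - k)) * hc'
  have hdiff : (a - b) ^ 2 = (a' - b') ^ 2 := by
    have hpos : 0 < 2 * (1 - k) * l + (c - (a - b) ^ 2) + (c - (a' - b') ^ 2) := by
      have : 0 < 2 * (1 - k) * l := by positivity
      nlinarith
    have h := mul_eq_zero.1 (show ((a - b) ^ 2 - (a' - b') ^ 2) *
        (2 * (1 - k) * l + (c - (a - b) ^ 2) + (c - (a' - b') ^ 2)) = 0 by
      linear_combination hroot' - hroot)
    exact sub_eq_zero.1 (h.resolve_right hpos.ne')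
  have hprod : a * b = a' * b' :=
    mul_right_cancel₀ hτ.ne' (by linear_combination (hc' - hc - hdiff) / 2)
  have hsum : a + b = a' + b' :=
    (pow_left_inj₀ (by positivity) (by positivity) two_ne_zero).1
      (by linear_combination hdiff + 4 * hprod)
  have hsub : a - b = a' - b' := by
    rcases sq_eq_sq_iff_eq_or_eq_neg.1 hdiff with h | h
    · exact h
    · nlinarith
  constructor <;> linarith

end Euclidean

theorem congr_of_external_bisector (A B C C' D D' E E' : Pt)
    (hABC : AffineIndependent ℝ ![A, B, C])
    (hABC' : AffineIndependent ℝ ![A, B, C'])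
    (hang : ∠ A C B = ∠ A C' B)
    (hside : (affineSpan ℝ ({A, B} : Set Pt)).SSameSide C C')
    (hside' : (AffineSubspace.perpBisector A B).SSameSide C C')
    (hD : D ∈ segment ℝ A B) (hbisD : ∠ A C D = ∠ B C D)
    (hD' : D' ∈ segment ℝ A B) (hbisD' : ∠ A C' D' = ∠ B C' D')
    (hE : E ∈ affineSpan ℝ ({A, B} : Set Pt))
    (hperp : (inner ℝ (E -ᵥ C) (D -ᵥ C) : ℝ) = 0)
    (hE' : E' ∈ affineSpan ℝ ({A, B} : Set Pt))
    (hperp' : (inner ℝ (E' -ᵥ C') (D' -ᵥ C') : ℝ) = 0)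
    (hlen : dist C E = dist C' E') :
    C = C' := by
  have hC := notMem_affineSpan_pair_of_affineIndependent hABC
  have hC' := notMem_affineSpan_pair_of_affineIndependent hABC'
  have hbis := dist_sq_mul_sq_eq_of_externalBisector hC
    (mem_segment_iff_wbtw.1 hD).mem_affineSpan hbisD hE hperp
  have hbis' := dist_sq_mul_sq_eq_of_externalBisector hC'
    (mem_segment_iff_wbtw.1 hD').mem_affineSpan hbisD' hE' hperp'
  rw [hlen, hang] at hbis
  have hCE : 0 < dist C' E' ^ 2 := by
    rw [← hlen]
    exact pow_pos (dist_pos.2 fun h : C = E => hC (h ▸ hE)) 2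
  obtain ⟨hA, hB⟩ := eq_and_eq_of_lawCos_of_externalBisector dist_nonneg dist_nonneg dist_nonneg
    dist_nonneg hCE (hang ▸ law_cos A C B) (law_cos A C' B) hbis hbis'
    (sq_sub_sq_mul_pos_of_sSameSide_perpBisector hside')
  exact eq_of_dist_eq_of_sSameSide hA hB hside

end
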